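/- Let G(p) be a framework on n nodes in general position in ℝ^r with r ≤ n−2, admitting a positive semidefinite stress matrix of rank n−r−1. Then there does not exist a framework G(q) in ℝ^r with q^i = Ap^i + b for all i that is equivalent (equal edge lengths) but not congruent to G(p). -/

import Mathlib

open Matrix

/-- The (r+1)×n matrix whose j-th column is (p^j, 1). -/
def calA {n r : ℕ} (p : Fin n → EuclideanSpace ℝ (Fin r)) :
    Matrix (Fin (r + 1)) (Fin n) ℝ :=
  fun i j => if h : (i : ℕ) < r then p j ⟨i, h⟩ else 1

/-- No subset of the points of cardinality r+1 is affinely dependent. -/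
def InGeneralPosition {n r : ℕ} (p : Fin n → EuclideanSpace ℝ (Fin r)) : Prop :=
  ∀ s : Finset (Fin n), s.card = r + 1 →
    AffineIndependent ℝ (fun i : {x // x ∈ s} => p i)

/-- `S` is a stress matrix of the framework `G(p)`. -/
def IsStressMatrix {n r : ℕ} (G : SimpleGraph (Fin n))
    (p : Fin n → EuclideanSpace ℝ (Fin r)) (S : Matrix (Fin n) (Fin n) ℝ) : Prop :=
  S.IsSymm ∧ (∀ i j, i ≠ j → ¬ G.Adj i j → S i j = 0) ∧ calA p * S = 0

/-!
Let `F i j = ‖q i - q j‖² - ‖p i - p j‖²`. Since `q` is an affine image of `p`, `F` is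
`u 1ᵀ + 1 uᵀ` minus twice a difference of Gram matrices, so `F c` is a constant vector for every
affine dependency `c` of the points. The rows of the stress `S` are such dependencies, and
`F k j * S k j = 0` for all `j` (`F` vanishes on edges and the diagonal, `S` off them), hence
`(F S) i k = (F S) k k = 0`. So every row of `F` lies in `ker S`, which by the rank condition and
general position consists of the values of affine functions at the nodes. Row `i` of `F` vanishes
on the closed neighbourhood of `i`, which has more than `r + 1` nodes; an affine function vanishing
at `r + 1` points in general position is zero, so `F = 0`.
-/

open Finset

section Lifting

variable {n r : ℕ} {p : Fin n → EuclideanSpace ℝ (Fin r)}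

@[simp]
lemma calA_last (j : Fin n) :
    calA p (Fin.last r) j = 1 := by
  simp [calA]

@[simp]
lemma calA_castSucc (i : Fin r) (j : Fin n) :
    calA p i.castSucc j = p j i := by
  simp [calA]

lemma sum_smul_calA_transpose_eq_zero_iff (s : Finset (Fin n)) (c : Fin n → ℝ) :
    ∑ j ∈ s, c j • (calA p)ᵀ j = 0 ↔ ∑ j ∈ s, c j = 0 ∧ ∑ j ∈ s, c j • p j = 0 := by
  rw [funext_iff, Fin.forall_fin_succ', and_comm]
  refine and_congr (by simp) ?_
  rw [← (EuclideanSpace.equiv (Fin r) ℝ).injective.eq_iff, funext_iff]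
  simp [Finset.sum_apply]

lemma calA_mulVec_eq_zero_iff (c : Fin n → ℝ) :
    calA p *ᵥ c = 0 ↔ ∑ j, c j = 0 ∧ ∑ j, c j • p j = 0 := by
  rw [mulVec_eq_sum, ← sum_smul_calA_transpose_eq_zero_iff]
  simp only [op_smul_eq_smul]

end Lifting

namespace InGeneralPosition

variable {n r : ℕ} {p : Fin n → EuclideanSpace ℝ (Fin r)}

lemma linearIndepOn_calA_transpose (hgen : InGeneralPosition p) (hn : r + 1 ≤ n)
    {T : Finset (Fin n)} (hT : #T ≤ r + 1) : LinearIndepOn ℝ (calA p)ᵀ (T : Set (Fin n)) := by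
  obtain ⟨J, hTJ, -, hJ⟩ := exists_subsuperset_card_eq (subset_univ T) hT (by simpa using hn)
  refine LinearIndepOn.mono ?_ (coe_subset.mpr hTJ)
  refine linearIndepOn_finset_iff.mpr fun f hf i hi => ?_
  obtain ⟨hsum, hcomb⟩ := (sum_smul_calA_transpose_eq_zero_iff J f).mp hf
  have hsum' : ∑ j : J, f j = 0 := by rwa [sum_coe_sort J f]
  refine (affineIndependent_iff_of_fintype ℝ _).mp (hgen J hJ) (fun j => f j) hsum' ?_ ⟨i, hi⟩
  rw [weightedVSub_eq_linear_combination _ hsum']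
  simpa only [sum_coe_sort J (fun j => f j • p j)] using hcomb

lemma eq_zero_of_calA_mulVec_eq_zero (hgen : InGeneralPosition p) (hn : r + 1 ≤ n)
    {c : Fin n → ℝ} (hc : calA p *ᵥ c = 0) {T : Finset (Fin n)} (hT : #T ≤ r + 1)
    (hsupp : ∀ j ∉ T, c j = 0) : c = 0 := by
  have hcT : ∑ j ∈ T, c j • (calA p)ᵀ j = 0 := by
    rw [sum_subset (subset_univ T) fun j _ hj => by rw [hsupp j hj, zero_smul]]
    simpa only [mulVec_eq_sum, op_smul_eq_smul] using hc
  funext j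
  by_cases hj : j ∈ T
  · exact linearIndepOn_finset_iff.mp (hgen.linearIndepOn_calA_transpose hn hT) c hcT j hj
  · exact hsupp j hj

lemma eq_zero_of_calA_transpose_mulVec_eq_zero_on (hgen : InGeneralPosition p)
    {y : Fin (r + 1) → ℝ} {J : Finset (Fin n)} (hJ : r + 1 ≤ #J)
    (hy : ∀ j ∈ J, ((calA p)ᵀ *ᵥ y) j = 0) : y = 0 := by
  obtain ⟨K, hKJ, hK⟩ := exists_subset_card_eq hJ
  have hn : r + 1 ≤ n := hJ.trans (by simpa using card_le_univ J)
  have hspan : Submodule.span ℝ (Set.range fun j : K => (calA p)ᵀ j) = ⊤ :=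
    (hgen.linearIndepOn_calA_transpose hn hK.le).span_eq_top_of_card_eq_finrank' (by simp [hK])
  obtain ⟨g, hg⟩ :=
    (Submodule.mem_span_range_iff_exists_fun ℝ).mp (hspan ▸ Submodule.mem_top (x := y))
  have hyy : y ⬝ᵥ y = 0 := by
    nth_rw 1 [← hg]
    rw [sum_dotProduct]
    exact sum_eq_zero fun j _ => by
      rw [smul_dotProduct, show (calA p)ᵀ j ⬝ᵥ y = 0 from hy j (hKJ j.2), smul_zero]
  exact dotProduct_self_eq_zero.mp hyy

end InGeneralPosition

theorem Matrix.ker_mulVecLin_eq_range_mulVecLin_of_mul_eq_zero {K l m ι : Type*} [Field K]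
    [Fintype m] [Fintype ι] {S : Matrix l ι K} {B : Matrix ι m K} (hSB : S * B = 0)
    (hB : Function.Injective B.mulVec) (hrank : S.rank + Fintype.card m = Fintype.card ι) :
    LinearMap.ker S.mulVecLin = LinearMap.range B.mulVecLin := by
  have hle : LinearMap.range B.mulVecLin ≤ LinearMap.ker S.mulVecLin := by
    rintro _ ⟨y, rfl⟩
    simp [mulVec_mulVec, hSB]
  have hB' : Module.finrank K (LinearMap.range B.mulVecLin) = Fintype.card m := by
    rw [LinearMap.finrank_range_of_inj hB, Module.finrank_fintype_fun_eq_card]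
  have hS := LinearMap.finrank_range_add_finrank_ker S.mulVecLin
  rw [Module.finrank_fintype_fun_eq_card] at hS
  exact (Submodule.eq_of_le_of_finrank_le hle (by rw [Matrix.rank] at hrank; omega)).symm

namespace IsStressMatrix

variable {n r : ℕ} {G : SimpleGraph (Fin n)} {p : Fin n → EuclideanSpace ℝ (Fin r)}
  {S : Matrix (Fin n) (Fin n) ℝ}

lemma mul_calA_transpose_eq_zero (hS : IsStressMatrix G p S) : S * (calA p)ᵀ = 0 := by
  simpa [transpose_mul, hS.1.eq] using congrArg transpose hS.2.2

lemma calA_mulVec_row_eq_zero (hS : IsStressMatrix G p S) (k : Fin n) : calA p *ᵥ S k = 0 := by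
  rw [← vecMul_transpose, ← mul_apply_eq_vecMul, hS.mul_calA_transpose_eq_zero]
  rfl

lemma ker_mulVecLin_eq_range (hS : IsStressMatrix G p S) (hgen : InGeneralPosition p)
    (hn : r + 1 ≤ n) (hrank : S.rank = n - r - 1) :
    LinearMap.ker S.mulVecLin = LinearMap.range (calA p)ᵀ.mulVecLin := by
  refine ker_mulVecLin_eq_range_mulVecLin_of_mul_eq_zero hS.mul_calA_transpose_eq_zero ?_
    (by rw [Fintype.card_fin, Fintype.card_fin]; omega)
  refine (injective_iff_map_eq_zero (calA p)ᵀ.mulVecLin).mpr fun y hy =>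
    hgen.eq_zero_of_calA_transpose_mulVec_eq_zero_on (J := univ) (by simpa using hn) fun j _ => ?_
  rw [← mulVecLin_apply, hy, Pi.zero_apply]


lemma eq_zero_of_mulVec_eq_zero_of_eq_zero_on (hS : IsStressMatrix G p S)
    (hgen : InGeneralPosition p) (hrank : S.rank = n - r - 1) {v : Fin n → ℝ} (hv : S *ᵥ v = 0)
    {J : Finset (Fin n)} (hJ : r + 1 ≤ #J) (hvJ : ∀ j ∈ J, v j = 0) : v = 0 := by
  have hn : r + 1 ≤ n := hJ.trans (by simpa using card_le_univ J)
  obtain ⟨y, rfl⟩ : v ∈ LinearMap.range (calA p)ᵀ.mulVecLin := by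
    rw [← hS.ker_mulVecLin_eq_range hgen hn hrank]
    exact hv
  rw [mulVecLin_apply, hgen.eq_zero_of_calA_transpose_mulVec_eq_zero_on hJ hvJ, mulVec_zero]

lemma row_ne_zero (hS : IsStressMatrix G p S) (hgen : InGeneralPosition p) (hn : r + 2 ≤ n)
    (hrank : S.rank = n - r - 1) (i : Fin n) : S i ≠ 0 := by
  intro hi
  have hker : S *ᵥ Pi.single i 1 = 0 := by
    rw [mulVec_single_one, col, ← hS.1.eq, transpose_transpose, hi]
  have hsingle : (Pi.single i 1 : Fin n → ℝ) = 0 :=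
    hS.eq_zero_of_mulVec_eq_zero_of_eq_zero_on hgen hrank hker (J := univ.erase i)
      (by rw [card_erase_of_mem (mem_univ i), card_univ, Fintype.card_fin]; omega)
      fun j hj => Pi.single_eq_of_ne (ne_of_mem_erase hj) 1
  simpa using congrFun hsingle i

/-- Row `i` of `S` is a nonzero affine dependency supported on the closed neighbourhood of `i`,
and general position forbids such dependencies among `r + 1` or fewer points. -/
lemma lt_card_closedNeighborhood [DecidableRel G.Adj] (hS : IsStressMatrix G p S)
    (hgen : InGeneralPosition p) (hn : r + 2 ≤ n) (hrank : S.rank = n - r - 1) (i : Fin n) :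
    r + 1 < #(insert i (G.neighborFinset i)) := by
  by_contra! hcard
  refine hS.row_ne_zero hgen hn hrank i <|
    hgen.eq_zero_of_calA_mulVec_eq_zero (by omega) (hS.calA_mulVec_row_eq_zero i) hcard
      fun j hj => ?_
  rw [mem_insert, SimpleGraph.mem_neighborFinset, not_or] at hj
  exact hS.2.1 i j (Ne.symm hj.1) hj.2

end IsStressMatrix

section DistSqDiff

variable {ι P Q : Type*} [PseudoMetricSpace P] [PseudoMetricSpace Q]

def distSqDiff (p : ι → P) (q : ι → Q) (i j : ι) : ℝ :=
  dist (q i) (q j) ^ 2 - dist (p i) (p j) ^ 2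

variable {p : ι → P} {q : ι → Q}

@[simp]
lemma distSqDiff_self (i : ι) : distSqDiff p q i i = 0 := by
  simp [distSqDiff]

lemma distSqDiff_eq_zero_iff {i j : ι} :
    distSqDiff p q i j = 0 ↔ dist (q i) (q j) = dist (p i) (p j) := by
  rw [distSqDiff, sub_eq_zero, sq_eq_sq₀ dist_nonneg dist_nonneg]

end DistSqDiff

section AffineImage

variable {ι E F : Type*} [Fintype ι] [NormedAddCommGroup E] [InnerProductSpace ℝ E]
  [NormedAddCommGroup F] [InnerProductSpace ℝ F] {c : ι → ℝ}

lemma sum_mul_dist_sq_eq_of_sum_smul_eq_zero (x : ι → E) (hc : ∑ j, c j = 0)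
    (hcx : ∑ j, c j • x j = 0) (i : ι) :
    ∑ j, c j * dist (x i) (x j) ^ 2 = ∑ j, c j * ‖x j‖ ^ 2 := by
  calc ∑ j, c j * dist (x i) (x j) ^ 2
      = ∑ j, (c j * ‖x i‖ ^ 2 - 2 * inner ℝ (x i) (c j • x j) + c j * ‖x j‖ ^ 2) := by
        refine sum_congr rfl fun j _ => ?_
        rw [dist_eq_norm, norm_sub_sq_real, real_inner_smul_right]
        ring
    _ = (∑ j, c j) * ‖x i‖ ^ 2 - 2 * inner ℝ (x i) (∑ j, c j • x j) + ∑ j, c j * ‖x j‖ ^ 2 := by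
        rw [sum_add_distrib, sum_sub_distrib, ← sum_mul, inner_sum, mul_sum]
    _ = ∑ j, c j * ‖x j‖ ^ 2 := by
        rw [hc, hcx, inner_zero_right]
        ring

lemma sum_mul_distSqDiff_eq_of_affine {p : ι → E} {q : ι → F} {L : E →ₗ[ℝ] F} {b : F}
    (hq : ∀ i, q i = L (p i) + b) (hc : ∑ j, c j = 0) (hcp : ∑ j, c j • p j = 0) (i k : ι) :
    ∑ j, c j * distSqDiff p q i j = ∑ j, c j * distSqDiff p q k j := by
  have hcLp : ∑ j, c j • L (p j) = 0 := by
    simp_rw [← map_smul, ← map_sum, hcp, map_zero]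
  have hrow : ∀ i, ∑ j, c j * distSqDiff p q i j = ∑ j, c j * (‖L (p j)‖ ^ 2 - ‖p j‖ ^ 2) := by
    intro i
    simp only [distSqDiff, hq, dist_add_right, mul_sub, sum_sub_distrib]
    rw [sum_mul_dist_sq_eq_of_sum_smul_eq_zero (fun j => L (p j)) hc hcLp,
      sum_mul_dist_sq_eq_of_sum_smul_eq_zero p hc hcp]
  rw [hrow i, hrow k]

end AffineImage

lemma IsStressMatrix.mulVec_distSqDiff_eq_zero {n r : ℕ} {F : Type*} [NormedAddCommGroup F]
    [InnerProductSpace ℝ F] {G : SimpleGraph (Fin n)} {p : Fin n → EuclideanSpace ℝ (Fin r)}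
    {q : Fin n → F} {S : Matrix (Fin n) (Fin n) ℝ} (hS : IsStressMatrix G p S)
    {L : EuclideanSpace ℝ (Fin r) →ₗ[ℝ] F} {b : F} (hq : ∀ i, q i = L (p i) + b)
    (hequiv : ∀ i j, G.Adj i j → dist (q i) (q j) = dist (p i) (p j)) (i : Fin n) :
    S *ᵥ distSqDiff p q i = 0 := by
  funext k
  obtain ⟨hc, hcp⟩ := (calA_mulVec_eq_zero_iff _).mp (hS.calA_mulVec_row_eq_zero k)
  change ∑ j, S k j * distSqDiff p q i j = 0
  rw [sum_mul_distSqDiff_eq_of_affine hq hc hcp i k]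
  refine sum_eq_zero fun j _ => ?_
  by_cases hkj : k = j
  · rw [hkj, distSqDiff_self, mul_zero]
  by_cases hadj : G.Adj k j
  · rw [distSqDiff_eq_zero_iff.mpr (hequiv k j hadj), mul_zero]
  rw [hS.2.1 k j hkj hadj, zero_mul]

theorem no_affine_flex_of_general_position_general {n r : ℕ} (hn : r + 2 ≤ n)
    (G : SimpleGraph (Fin n)) (p : Fin n → EuclideanSpace ℝ (Fin r))
    (hgen : InGeneralPosition p)
    (S : Matrix (Fin n) (Fin n) ℝ) (hS : IsStressMatrix G p S)
    (hrank : S.rank = n - r - 1) :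
    ¬ ∃ (q : Fin n → EuclideanSpace ℝ (Fin r)) (A : Matrix (Fin r) (Fin r) ℝ)
        (b : EuclideanSpace ℝ (Fin r)),
      (∀ i, q i = Matrix.toEuclideanLin A (p i) + b) ∧
      (∀ i j, G.Adj i j → dist (q i) (q j) = dist (p i) (p j)) ∧
      ¬ (∀ i j, dist (q i) (q j) = dist (p i) (p j)) := by
  classical
  rintro ⟨q, A, b, hq, hequiv, hncong⟩
  refine hncong fun i j => distSqDiff_eq_zero_iff.mp (congrFun (?_ : distSqDiff p q i = 0) j)
  refine hS.eq_zero_of_mulVec_eq_zero_of_eq_zero_on hgen hrank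
    (hS.mulVec_distSqDiff_eq_zero hq hequiv i) (hS.lt_card_closedNeighborhood hgen hn hrank i).le
    fun k hk => ?_
  rcases mem_insert.mp hk with rfl | hk
  · exact distSqDiff_self k
  · exact distSqDiff_eq_zero_iff.mpr (hequiv i k ((G.mem_neighborFinset i k).mp hk))

theorem no_affine_flex_of_general_position {n r : ℕ} (hn : r + 2 ≤ n)
    (G : SimpleGraph (Fin n)) (p : Fin n → EuclideanSpace ℝ (Fin r))
    (hgen : InGeneralPosition p)
    (hspan : affineSpan ℝ (Set.range p) = ⊤)
    (S : Matrix (Fin n) (Fin n) ℝ) (hS : IsStressMatrix G p S)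
    (hpsd : S.PosSemidef) (hrank : S.rank = n - r - 1) :
    ¬ ∃ (q : Fin n → EuclideanSpace ℝ (Fin r)) (A : Matrix (Fin r) (Fin r) ℝ)
        (b : EuclideanSpace ℝ (Fin r)),
      (∀ i, q i = Matrix.toEuclideanLin A (p i) + b) ∧
      (∀ i j, G.Adj i j → dist (q i) (q j) = dist (p i) (p j)) ∧
      ¬ (∀ i j, dist (q i) (q j) = dist (p i) (p j)) :=
  no_affine_flex_of_general_position_general hn G p hgen S hS hrank
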